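/- In any vertex algebra $\mathcal A$, for elements $a,b,c$, the non-associativity of the Wick product is measured by $:(:ab:)c: - :abc: = \sum_{n\ge 0}\frac{1}{(n+1)!}\big(:(\partial^{n+1}a)(b\circ_n c): + (-1)^{|a||b|}:(\partial^{n+1}b)(a\circ_n c):\big)$, where the sum is finite. -/
import Mathlib


open scoped BigOperators

/-- Generalized binomial coefficient `m choose j` for an integer `m`, as a complex number. -/
noncomputable def zchoose (m : ℤ) (j : ℕ) : ℂ :=
  (∏ i ∈ Finset.range j, ((m : ℂ) - (i : ℂ))) / (Nat.factorial j : ℂ)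

/-- A vertex superalgebra presented via its circle products `∘ₙ`, in the sense of
Lian-Zuckerman (a commutative quantum operator algebra).  The parity grading is recorded by
the submodules `even`, `odd`; `comm_even`/`comm_odd` encode the Borcherds commutator formula
for the Fourier modes acting on the left regular module, and `iterate_even`/`iterate_odd`
encode the iterate (associativity) formula. -/
structure VA (V : Type) [AddCommGroup V] [Module ℂ V] where
  circ : ℤ → V →ₗ[ℂ] V →ₗ[ℂ] V
  one : V
  even : Submodule ℂ V
  odd : Submodule ℂ V
  one_even : one ∈ even
  circ_ee : ∀ (n : ℤ) {a b : V}, a ∈ even → b ∈ even → circ n a b ∈ even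
  circ_oo : ∀ (n : ℤ) {a b : V}, a ∈ odd → b ∈ odd → circ n a b ∈ even
  circ_eo : ∀ (n : ℤ) {a b : V}, a ∈ even → b ∈ odd → circ n a b ∈ odd
  circ_oe : ∀ (n : ℤ) {a b : V}, a ∈ odd → b ∈ even → circ n a b ∈ odd
  unit_left : ∀ (n : ℤ) (a : V), circ n one a = if n = -1 then a else 0
  unit_right_wick : ∀ a : V, circ (-1) a one = a
  unit_right_nonneg : ∀ (n : ℤ) (a : V), 0 ≤ n → circ n a one = 0
  truncate : ∀ a b : V, ∃ N : ℕ, ∀ n : ℤ, (N : ℤ) ≤ n → circ n a b = 0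
  comm_even : ∀ {a b : V}, (a ∈ even ∨ b ∈ even) → ∀ (m n : ℤ) (c : V),
    circ m a (circ n b c) - circ n b (circ m a c)
      = ∑ᶠ j : ℕ, zchoose m j • circ (m + n - (j : ℤ)) (circ (j : ℤ) a b) c
  comm_odd : ∀ {a b : V}, a ∈ odd → b ∈ odd → ∀ (m n : ℤ) (c : V),
    circ m a (circ n b c) + circ n b (circ m a c)
      = ∑ᶠ j : ℕ, zchoose m j • circ (m + n - (j : ℤ)) (circ (j : ℤ) a b) c
  iterate_even : ∀ {a b : V}, (a ∈ even ∨ b ∈ even) → ∀ (m n : ℤ) (c : V),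
    circ m (circ n a b) c
      = ∑ᶠ j : ℕ, ((-1 : ℂ) ^ j * zchoose n j) •
          (circ (n - (j : ℤ)) a (circ (m + (j : ℤ)) b c)
            - ((-1 : ℂ) ^ n) • circ (n + m - (j : ℤ)) b (circ (j : ℤ) a c))
  iterate_odd : ∀ {a b : V}, a ∈ odd → b ∈ odd → ∀ (m n : ℤ) (c : V),
    circ m (circ n a b) c
      = ∑ᶠ j : ℕ, ((-1 : ℂ) ^ j * zchoose n j) •
          (circ (n - (j : ℤ)) a (circ (m + (j : ℤ)) b c)
            + ((-1 : ℂ) ^ n) • circ (n + m - (j : ℤ)) b (circ (j : ℤ) a c))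

namespace VA

variable {V : Type} [AddCommGroup V] [Module ℂ V] (A : VA V)

/-- The formal derivative `∂a = a ∘₋₂ 1`. -/
def D (a : V) : V := A.circ (-2) a A.one

/-- The Wick (normally ordered) product `:ab: = a ∘₋₁ b`. -/
def wick (a b : V) : V := A.circ (-1) a b

end VA

namespace VA

/-- Iterated (right-normalized) Wick product of a list of elements. -/
def wlist {V : Type} [AddCommGroup V] [Module ℂ V] (A : VA V) : List V → V
  | [] => A.one
  | a :: l => A.wick a (wlist A l)

/-- Iterated Wick power. -/
def wpow {V : Type} [AddCommGroup V] [Module ℂ V] (A : VA V) (a : V) : ℕ → V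
  | 0 => A.one
  | k + 1 => A.wick a (wpow A a k)

end VA



section Aux

lemma zchoose_neg_one (j : ℕ) : zchoose (-1) j = (-1 : ℂ) ^ j := by
  have h : ∏ i ∈ Finset.range j, (((-1 : ℤ) : ℂ) - (i : ℂ))
      = (-1 : ℂ) ^ j * (Nat.factorial j : ℂ) := by
    induction j with
    | zero => simp
    | succ k ih =>
      rw [Finset.prod_range_succ, ih, Nat.factorial_succ]
      push_cast
      ring
  rw [zchoose, h, mul_div_assoc, div_self (by exact_mod_cast Nat.factorial_ne_zero j), mul_one]

lemma zchoose_neg_two (j : ℕ) : zchoose (-2) j = (-1 : ℂ) ^ j * ((j : ℂ) + 1) := by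
  have h : ∏ i ∈ Finset.range j, (((-2 : ℤ) : ℂ) - (i : ℂ))
      = (-1 : ℂ) ^ j * (Nat.factorial (j + 1) : ℂ) := by
    induction j with
    | zero => simp
    | succ k ih =>
      rw [Finset.prod_range_succ, ih, Nat.factorial_succ (k + 1)]
      push_cast
      ring
  rw [zchoose, h]
  have hf : (Nat.factorial j : ℂ) ≠ 0 := by exact_mod_cast Nat.factorial_ne_zero j
  rw [Nat.factorial_succ]
  push_cast
  field_simp

namespace VA

variable {V : Type} [AddCommGroup V] [Module ℂ V] (A : VA V)

lemma circ_D (z y : V) (m : ℤ) (hm : m < 0) :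
    A.circ m (A.D z) y = (-(m : ℂ)) • A.circ (m - 1) z y := by
  have h := A.iterate_even (a := z) (Or.inr A.one_even) m (-2) y
  rw [VA.D, h]
  set j₀ : ℕ := (-1 - m).toNat with hj0
  have hj0' : (j₀ : ℤ) = -1 - m := Int.toNat_of_nonneg (by omega)
  rw [finsum_eq_single _ j₀ ?hzero]
  case hzero =>
    intro x hx
    have hx' : (x : ℤ) ≠ -1 - m := by
      rw [← hj0']; exact_mod_cast hx
    rw [A.unit_left, A.unit_left, if_neg (by omega), if_neg (by omega)]
    simp
  · rw [A.unit_left, A.unit_left, if_pos (by omega), if_neg (by omega)]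
    rw [zchoose_neg_two]
    have hidx : (-2 : ℤ) - (j₀ : ℤ) = m - 1 := by omega
    rw [hidx]
    have hc : (-1 : ℂ) ^ j₀ * ((-1 : ℂ) ^ j₀ * ((j₀ : ℂ) + 1)) = -(m : ℂ) := by
      rw [← mul_assoc, ← mul_pow]
      have : ((j₀ : ℂ) + 1) = -(m : ℂ) := by
        have : ((j₀ : ℤ) : ℂ) = (-1 : ℂ) - m := by exact_mod_cast congrArg (Int.cast : ℤ → ℂ) hj0'
        push_cast at this
        rw [this]; ring
      rw [this]; norm_num
    rw [smul_zero, sub_zero, hc]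

lemma circ_iterateD (z y : V) : ∀ (k : ℕ) (m : ℤ), m < 0 →
    A.circ m (A.D^[k] z) y
      = (∏ i ∈ Finset.range k, (-(m : ℂ) + (i : ℂ))) • A.circ (m - k) z y
  | 0, m, _ => by simp
  | (k + 1), m, hm => by
    rw [Function.iterate_succ_apply', A.circ_D _ _ m hm,
      circ_iterateD z y k (m - 1) (by omega), smul_smul]
    congr 1
    · have hp : ∏ i ∈ Finset.range k, (-(((m - 1 : ℤ)) : ℂ) + (i : ℂ))
          = ∏ i ∈ Finset.range k, (-(m : ℂ) + ((i + 1 : ℕ) : ℂ)) :=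
        Finset.prod_congr rfl (fun i _ => by push_cast; ring)
      rw [Finset.prod_range_succ', hp]
      push_cast
      ring
    · congr 1
      push_cast
      ring

lemma wick_iterateD (x y : V) (n : ℕ) :
    A.wick (A.D^[n + 1] x) y
      = ((Nat.factorial (n + 1) : ℂ)) • A.circ (-2 - (n : ℤ)) x y := by
  rw [VA.wick, A.circ_iterateD x y (n + 1) (-1) (by omega)]
  congr 1
  · calc ∏ i ∈ Finset.range (n + 1), (-((-1 : ℤ) : ℂ) + (i : ℂ))
        = ∏ i ∈ Finset.range (n + 1), (((i + 1 : ℕ) : ℂ)) :=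
          Finset.prod_congr rfl (fun i _ => by push_cast; ring)
      _ = ((∏ i ∈ Finset.range (n + 1), (i + 1) : ℕ) : ℂ) := by rw [Nat.cast_prod]
      _ = _ := by rw [Finset.prod_range_add_one_eq_factorial]
  · congr 1
    push_cast
    ring

end VA

namespace VA

variable {V : Type} [AddCommGroup V] [Module ℂ V] (A : VA V)

lemma key (a b c : V) (s : ℂ) (N : ℕ)
    (hN : ∀ n : ℤ, (N : ℤ) ≤ n → A.circ n b c = 0 ∧ A.circ n a c = 0)
    (hiter : A.wick (A.wick a b) c
      = ∑ᶠ j : ℕ, (A.circ (-1 - (j : ℤ)) a (A.circ (-1 + (j : ℤ)) b c)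
          + s • A.circ (-1 + -1 - (j : ℤ)) b (A.circ (j : ℤ) a c))) :
    A.wick (A.wick a b) c - A.wick a (A.wick b c)
      = ∑ᶠ n : ℕ, ((Nat.factorial (n + 1) : ℂ))⁻¹ •
          (A.wick (A.D^[n + 1] a) (A.circ (n : ℤ) b c)
            + s • A.wick (A.D^[n + 1] b) (A.circ (n : ℤ) a c)) := by
  -- canonical summands
  set X : ℕ → V := fun n => A.circ (-2 - (n : ℤ)) a (A.circ (n : ℤ) b c) with hX
  set Y : ℕ → V := fun n => s • A.circ (-2 - (n : ℤ)) b (A.circ (n : ℤ) a c) with hY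
  -- RHS as a finite sum
  have hR : (∑ᶠ n : ℕ, ((Nat.factorial (n + 1) : ℂ))⁻¹ •
          (A.wick (A.D^[n + 1] a) (A.circ (n : ℤ) b c)
            + s • A.wick (A.D^[n + 1] b) (A.circ (n : ℤ) a c)))
      = ∑ n ∈ Finset.range (N + 1), (X n + Y n) := by
    rw [finsum_eq_sum_of_support_subset _ (s := Finset.range (N + 1)) ?hsupp]
    case hsupp =>
      intro n hn
      simp only [Function.mem_support, ne_eq] at hn
      by_contra hmem
      apply hn
      simp only [Finset.coe_range, Set.mem_Iio, not_lt] at hmem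
      have h1 : A.circ (n : ℤ) b c = 0 := (hN n (by exact_mod_cast le_trans (Nat.le_succ N) hmem)).1
      have h2 : A.circ (n : ℤ) a c = 0 := (hN n (by exact_mod_cast le_trans (Nat.le_succ N) hmem)).2
      simp [h1, h2, VA.wick]
    refine Finset.sum_congr rfl (fun n _ => ?_)
    rw [A.wick_iterateD, A.wick_iterateD]
    have hfac : ((Nat.factorial (n + 1) : ℂ)) ≠ 0 := by
      exact_mod_cast Nat.factorial_ne_zero (n + 1)
    rw [smul_comm s ((Nat.factorial (n + 1) : ℂ)), ← smul_add, smul_smul,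
      inv_mul_cancel₀ hfac, one_smul]
  -- LHS finsum as a finite sum
  have hL : A.wick (A.wick a b) c
      = ∑ j ∈ Finset.range (N + 1),
          (A.circ (-1 - (j : ℤ)) a (A.circ (-1 + (j : ℤ)) b c)
            + s • A.circ (-1 + -1 - (j : ℤ)) b (A.circ (j : ℤ) a c)) := by
    rw [hiter, finsum_eq_sum_of_support_subset _ (s := Finset.range (N + 1)) ?hsupp2]
    case hsupp2 =>
      intro j hj
      simp only [Function.mem_support, ne_eq] at hj
      by_contra hmem
      apply hj
      simp only [Finset.coe_range, Set.mem_Iio, not_lt] at hmem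
      have h1 : A.circ (-1 + (j : ℤ)) b c = 0 := (hN _ (by
        have : (N : ℤ) + 1 ≤ (j : ℤ) := by exact_mod_cast hmem
        omega)).1
      have h2 : A.circ (j : ℤ) a c = 0 := (hN _ (by
        have : (N : ℤ) + 1 ≤ (j : ℤ) := by exact_mod_cast hmem
        omega)).2
      simp [h1, h2]
  rw [hL, hR]
  -- split the sum
  rw [Finset.sum_add_distrib]
  have hu : ∑ j ∈ Finset.range (N + 1),
      A.circ (-1 - (j : ℤ)) a (A.circ (-1 + (j : ℤ)) b c)
      = A.wick a (A.wick b c) + ∑ n ∈ Finset.range (N + 1), X n := by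
    rw [Finset.sum_range_succ']
    have h1 : ∀ j ∈ Finset.range N,
        A.circ (-1 - ((j + 1 : ℕ) : ℤ)) a (A.circ (-1 + ((j + 1 : ℕ) : ℤ)) b c) = X j := by
      intro j _
      simp only [hX]
      have e1 : (-1 : ℤ) - ((j + 1 : ℕ) : ℤ) = -2 - (j : ℤ) := by push_cast; ring
      have e2 : (-1 : ℤ) + ((j + 1 : ℕ) : ℤ) = (j : ℤ) := by push_cast; ring
      rw [e1, e2]
    rw [Finset.sum_congr rfl h1]
    have h0 : A.circ (-1 - ((0 : ℕ) : ℤ)) a (A.circ (-1 + ((0 : ℕ) : ℤ)) b c)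
        = A.wick a (A.wick b c) := by
      norm_num [VA.wick]
    rw [h0]
    have hXN : X N = 0 := by
      simp only [hX]
      rw [(hN N le_rfl).1, map_zero]
    rw [Finset.sum_range_succ, hXN, add_zero]
    abel
  have hv : ∀ j ∈ Finset.range (N + 1),
      s • A.circ (-1 + -1 - (j : ℤ)) b (A.circ (j : ℤ) a c) = Y j := by
    intro j _
    simp only [hY]
    have e : (-1 : ℤ) + -1 - (j : ℤ) = -2 - (j : ℤ) := by ring
    rw [e]
  rw [Finset.sum_congr rfl hv, hu, Finset.sum_add_distrib]
  abel

end VA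

end Aux

/-- In any vertex algebra, for homogeneous `a, b` and any `c`, with
`s = (-1)^{|a||b|}`, the non-associativity of the Wick product is measured by
`:(:ab:)c: - :abc: = ∑_{n≥0} (1/(n+1)!)(:(∂^{n+1}a)(b∘ₙc): + s :(∂^{n+1}b)(a∘ₙc):)`,
and the sum is finite. -/
theorem wick_nonassoc (V : Type) [AddCommGroup V] [Module ℂ V] (A : VA V)
    (a b c : V) (s : ℂ)
    (hpar : ((a ∈ A.even ∨ b ∈ A.even) ∧ s = 1) ∨ (a ∈ A.odd ∧ b ∈ A.odd ∧ s = -1)) :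
    A.wick (A.wick a b) c - A.wick a (A.wick b c)
      = (∑ᶠ n : ℕ, ((Nat.factorial (n + 1) : ℂ))⁻¹ •
          (A.wick (A.D^[n + 1] a) (A.circ (n : ℤ) b c)
            + s • A.wick (A.D^[n + 1] b) (A.circ (n : ℤ) a c))) ∧
    ∃ N : ℕ, ∀ n : ℕ, N ≤ n → A.circ (n : ℤ) b c = 0 ∧ A.circ (n : ℤ) a c = 0 := by
  obtain ⟨N1, h1⟩ := A.truncate b c
  obtain ⟨N2, h2⟩ := A.truncate a c
  have hN : ∀ n : ℤ, ((max N1 N2 : ℕ) : ℤ) ≤ n →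
      A.circ n b c = 0 ∧ A.circ n a c = 0 := by
    intro n hn
    have e1 : (N1 : ℤ) ≤ n := le_trans (by exact_mod_cast le_max_left N1 N2) hn
    have e2 : (N2 : ℤ) ≤ n := le_trans (by exact_mod_cast le_max_right N1 N2) hn
    exact ⟨h1 n e1, h2 n e2⟩
  have hiter : A.wick (A.wick a b) c
      = ∑ᶠ j : ℕ, (A.circ (-1 - (j : ℤ)) a (A.circ (-1 + (j : ℤ)) b c)
          + s • A.circ (-1 + -1 - (j : ℤ)) b (A.circ (j : ℤ) a c)) := by
    rcases hpar with ⟨he, hs⟩ | ⟨ha, hb, hs⟩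
    · have h := A.iterate_even he (-1) (-1) c
      rw [VA.wick, VA.wick, h]
      refine finsum_congr fun j => ?_
      rw [zchoose_neg_one, ← mul_pow]
      norm_num [hs, sub_neg_eq_add]
    · have h := A.iterate_odd ha hb (-1) (-1) c
      rw [VA.wick, VA.wick, h]
      refine finsum_congr fun j => ?_
      rw [zchoose_neg_one, ← mul_pow]
      norm_num [hs]
  refine ⟨A.key a b c s (max N1 N2) hN hiter, ⟨max N1 N2, fun n hn => hN n (by exact_mod_cast hn)⟩⟩
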